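/- arXiv:2507.02260 — 4 statements merged into one kernel-verified Lean document; each statement's English description precedes it below -/
import Mathlib

section
/- If G is a finite 2-connected simple graph that is not isomorphic to a cycle graph C_n for any n ≥ 3, then G has at least 3 cycles. -/
open SimpleGraph

/-- A subgraph `H` of `G` is a cycle if it is nonempty, connected, and 2-regular. -/
def IsCycleSubgraph {V : Type} {G : SimpleGraph V} (H : G.Subgraph) : Prop :=
  H.verts.Nonempty ∧ H.Connected ∧ ∀ v ∈ H.verts, (H.neighborSet v).ncard = 2

/-- The number of cycles (cycle subgraphs) of a finite simple graph. -/
noncomputable def cycleCount {V : Type} [Fintype V] (G : SimpleGraph V) : ℕ :=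
  Set.ncard {H : G.Subgraph | IsCycleSubgraph H}

/-- A finite simple graph is 2-connected (inseparable) if it has at least 3 vertices,
is connected, and deleting any single vertex leaves a connected graph (no cutvertex). -/
def IsTwoConnected {V : Type} [Fintype V] (G : SimpleGraph V) : Prop :=
  3 ≤ Fintype.card V ∧ G.Connected ∧
    ∀ v : V, (G.induce {w : V | w ≠ v}).Connected

/-!
If some vertex `v` has three neighbours `x, y, z`, then, `G - v` being connected, any two of
them are joined by a path avoiding `v`, which closes up through `v` to a cycle whose edges at `v`
go exactly to that pair; the three pairs give three distinct cycles. Otherwise every vertex has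
degree exactly `2` (degree at least `2` is forced by 2-connectivity), so the connected 2-regular
graph `G` is one Hamiltonian cycle, i.e. `G ≃g C_n`.
-/

namespace SimpleGraph

variable {V W : Type*} {G : SimpleGraph V}

lemma exists_isPath_of_connected_induce_ne {v a b : V}
    (hconn : (G.induce {w : V | w ≠ v}).Connected) (ha : a ≠ v) (hb : b ≠ v) :
    ∃ p : G.Walk a b, p.IsPath ∧ v ∉ p.support := by
  classical
  obtain ⟨q⟩ := hconn.preconnected ⟨a, ha⟩ ⟨b, hb⟩
  let e : G.induce {w : V | w ≠ v} ↪g G := Embedding.induce _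
  refine ⟨q.bypass.map e.toHom, q.bypass_isPath.map e.injective, fun hv ↦ ?_⟩
  replace hv : v ∈ (q.bypass.map e.toHom).support := hv
  rw [Walk.support_map, List.mem_map] at hv
  obtain ⟨⟨w, hw⟩, -, hwv⟩ := hv
  exact hw hwv

lemma Walk.IsPath.isCycle_cons_concat {v x y : V} {p : G.Walk x y} (hp : p.IsPath)
    (hv : v ∉ p.support) (hx : G.Adj v x) (hy : G.Adj y v) (hxy : x ≠ y) :
    (Walk.cons hx (p.concat hy)).IsCycle := by
  refine (Walk.cons_isCycle_iff _ hx).mpr ⟨hp.concat hv hy, fun he ↦ ?_⟩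
  rw [Walk.edges_concat, List.concat_eq_append, List.mem_append, List.mem_singleton] at he
  rcases he with he | he
  · exact hv (p.fst_mem_support_of_mem_edges he)
  · rw [Sym2.eq_iff] at he
    rcases he with ⟨rfl, -⟩ | ⟨-, rfl⟩
    exacts [hy.ne rfl, hxy rfl]

lemma exists_isCycle_neighborSet_toSubgraph_eq_pair {v x y : V}
    (hconn : (G.induce {w : V | w ≠ v}).Connected) (hx : G.Adj v x) (hy : G.Adj v y)
    (hxy : x ≠ y) : ∃ c : G.Walk v v, c.IsCycle ∧ c.toSubgraph.neighborSet v = {x, y} := by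
  obtain ⟨p, hp, hvp⟩ := exists_isPath_of_connected_induce_ne hconn hx.ne' hy.ne'
  have hc := hp.isCycle_cons_concat hvp hx hy.symm hxy
  refine ⟨_, hc, .symm <| Set.eq_of_subset_of_ncard_le ?_ ?_
    (Walk.finite_neighborSet_toSubgraph _)⟩
  · simp [Set.insert_subset_iff, ← Subgraph.mem_edgeSet]
  · rw [hc.ncard_neighborSet_toSubgraph_eq_two (Walk.start_mem_support _), Set.ncard_pair hxy]

lemma Walk.IsCycle.isHamiltonianCycle_of_forall_mem_support [DecidableEq V] {v : V} {p : G.Walk v v}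
    (hp : p.IsCycle) (hmem : ∀ w, w ∈ p.support) : p.IsHamiltonianCycle := by
  refine ⟨hp, hp.isPath_tail.isHamiltonian_of_mem fun w ↦ ?_⟩
  have hw := hmem w
  rw [← p.cons_support_tail hp.not_nil, List.mem_cons] at hw
  rcases hw with rfl | hw
  exacts [Walk.end_mem_support _, hw]

lemma Hom.adj_iff_of_injective_of_ncard_neighborSet_le {H : SimpleGraph W} (f : H →g G)
    (hf : Function.Injective f) {v w : W} (hfin : (G.neighborSet (f v)).Finite)
    (hle : (G.neighborSet (f v)).ncard ≤ (H.neighborSet v).ncard) :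
    G.Adj (f v) (f w) ↔ H.Adj v w := by
  have himage : f '' H.neighborSet v = G.neighborSet (f v) := by
    refine Set.eq_of_subset_of_ncard_le ?_ (by rwa [Set.ncard_image_of_injective _ hf]) hfin
    rintro _ ⟨u, hu, rfl⟩
    exact f.map_adj hu
  rw [← mem_neighborSet, ← himage, hf.mem_set_image, mem_neighborSet]

lemma cycleGraph_ncard_neighborSet {n : ℕ} (hn : 3 ≤ n) (i : Fin n) :
    ((cycleGraph n).neighborSet i).ncard = 2 := by
  obtain ⟨m, rfl⟩ := Nat.exists_eq_add_of_le' hn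
  rw [← coe_neighborFinset, Set.ncard_coe_finset, card_neighborFinset_eq_degree,
    cycleGraph_degree_three_le]

lemma IsCycles.nonempty_iso_cycleGraph_of_isCycle [Fintype V] (hcyc : G.IsCycles) {v : V}
    {p : G.Walk v v} (hp : p.IsCycle) (hlen : p.length = Fintype.card V) :
    Nonempty (G ≃g cycleGraph (Fintype.card V)) := by
  have hn : 3 ≤ Fintype.card V := hlen ▸ hp.three_le_length
  obtain ⟨f⟩ := (cycleGraph_isContained_iff hn).mpr ⟨v, p, hp, hlen⟩
  have hbij : Function.Bijective f :=
    (Fintype.bijective_iff_injective_and_card f).mpr ⟨f.injective, by simp⟩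
  refine ⟨(RelIso.mk (Equiv.ofBijective f hbij) fun {i j} ↦ ?_).symm⟩
  refine f.toHom.adj_iff_of_injective_of_ncard_neighborSet_le f.injective (Set.toFinite _) ?_
  obtain ⟨k, hk⟩ : ((cycleGraph _).neighborSet i).Nonempty :=
    Set.nonempty_of_ncard_ne_zero (by simp [cycleGraph_ncard_neighborSet hn])
  rw [hcyc ⟨_, f.toHom.map_adj hk⟩, cycleGraph_ncard_neighborSet hn]

lemma Connected.nonempty_iso_cycleGraph_of_isCycles [Fintype V] [Nontrivial V]
    (hconn : G.Connected) (hcyc : G.IsCycles) :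
    Nonempty (G ≃g cycleGraph (Fintype.card V)) := by
  classical
  obtain ⟨v⟩ : Nonempty V := inferInstance
  obtain ⟨p, hp, hverts⟩ := hcyc.exists_cycle_toSubgraph_verts_eq_connectedComponentSupp
    (c := G.connectedComponentMk v) rfl
    ((G.neighborSet_nonempty).mpr (hconn.preconnected.not_isIsolated v))
  have hham : p.IsHamiltonianCycle := hp.isHamiltonianCycle_of_forall_mem_support fun w ↦ by
    rw [← Walk.mem_verts_toSubgraph, hverts, ConnectedComponent.mem_supp_iff,
      ConnectedComponent.eq]
    exact hconn.preconnected w v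
  exact hcyc.nonempty_iso_cycleGraph_of_isCycle hp hham.length_eq

end SimpleGraph

variable {V : Type} {G : SimpleGraph V}

lemma SimpleGraph.Walk.IsCycle.isCycleSubgraph_toSubgraph {v : V} {c : G.Walk v v}
    (hc : c.IsCycle) : IsCycleSubgraph c.toSubgraph :=
  ⟨⟨v, c.start_mem_verts_toSubgraph⟩, c.toSubgraph_connected,
    fun _ hw ↦ hc.ncard_neighborSet_toSubgraph_eq_two (c.mem_verts_toSubgraph.mp hw)⟩

lemma three_le_cycleCount_of_two_lt_ncard_neighborSet [Fintype V] {v : V}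
    (hconn : (G.induce {w : V | w ≠ v}).Connected) (hv : 2 < (G.neighborSet v).ncard) :
    3 ≤ cycleCount G := by
  obtain ⟨x, y, z, hx, hy, hz, hxy, hxz, hyz⟩ := (Set.two_lt_ncard_iff).mp hv
  obtain ⟨c₁, hc₁, hn₁⟩ := exists_isCycle_neighborSet_toSubgraph_eq_pair hconn hx hy hxy
  obtain ⟨c₂, hc₂, hn₂⟩ := exists_isCycle_neighborSet_toSubgraph_eq_pair hconn hx hz hxz
  obtain ⟨c₃, hc₃, hn₃⟩ := exists_isCycle_neighborSet_toSubgraph_eq_pair hconn hy hz hyz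
  have hsub : {c₁.toSubgraph, c₂.toSubgraph, c₃.toSubgraph} ⊆
      {H : G.Subgraph | IsCycleSubgraph H} := by
    simp [Set.insert_subset_iff, hc₁.isCycleSubgraph_toSubgraph,
      hc₂.isCycleSubgraph_toSubgraph, hc₃.isCycleSubgraph_toSubgraph]
  refine le_of_eq_of_le (Set.ncard_eq_three.mpr ⟨_, _, _, ?_, ?_, ?_, rfl⟩).symm
    (Set.ncard_le_ncard hsub (Set.toFinite _))
  all_goals
    intro h
    have hnbr := congrArg (·.neighborSet v) h
    simp only [hn₁, hn₂, hn₃, Set.pair_eq_pair_iff] at hnbr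
    tauto

lemma IsTwoConnected.two_le_ncard_neighborSet [Fintype V] (hG : IsTwoConnected G) (v : V) :
    2 ≤ (G.neighborSet v).ncard := by
  obtain ⟨hcard, hconn, hcut⟩ := hG
  have : Nontrivial V := Fintype.one_lt_card_iff_nontrivial.mp (by omega)
  obtain ⟨a, ha⟩ := (G.neighborSet_nonempty).mpr (hconn.preconnected.not_isIsolated v)
  have : Nontrivial {w : V | w ≠ a} := by
    rw [Set.nontrivial_coe_sort, ← Set.one_lt_ncard_iff_nontrivial, ← Set.compl_singleton_eq,
      Set.ncard_compl, Set.ncard_singleton, Nat.card_eq_fintype_card]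
    omega
  obtain ⟨⟨b, hba⟩, hb⟩ := (neighborSet_nonempty _).mpr
    ((hcut a).preconnected.not_isIsolated ⟨v, (ha : G.Adj v a).ne⟩)
  exact (Set.one_lt_ncard_iff).mpr ⟨a, b, ha, hb, Ne.symm hba⟩

/-- A finite 2-connected simple graph that is not a cycle graph has at least 3 cycles. -/
theorem three_cycles_of_not_cycleGraph {V : Type} [Fintype V] (G : SimpleGraph V)
    (hG : IsTwoConnected G)
    (h : ∀ n : ℕ, 3 ≤ n → IsEmpty (G ≃g SimpleGraph.cycleGraph n)) :
    3 ≤ cycleCount G := by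
  have ⟨hcard, hconn, hcut⟩ := hG
  by_cases hdeg : ∃ v, 2 < (G.neighborSet v).ncard
  · obtain ⟨v, hv⟩ := hdeg
    exact three_le_cycleCount_of_two_lt_ncard_neighborSet (hcut v) hv
  · push Not at hdeg
    have : Nontrivial V := Fintype.one_lt_card_iff_nontrivial.mp (by omega)
    have hcyc : G.IsCycles := fun v _ ↦ (hdeg v).antisymm (hG.two_le_ncard_neighborSet v)
    obtain ⟨e⟩ := hconn.nonempty_iso_cycleGraph_of_isCycles hcyc
    exact (h _ hcard).elim e
end

section
/- Let G be a finite simple graph and let v, w be distinct vertices of G. Let G' be the graph obtained from G by adjoining a new path v = x_0, x_1, ..., x_k = w of length k ≥ 2 whose internal vertices x_1, ..., x_{k-1} are new vertices not in G. Then the cycle count of G' equals the cycle count of G plus the number of paths between v and w in G. -/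
open SimpleGraph

/-- A subgraph `H` of `G` is a path with endpoints `v` and `w`: it is connected,
`v` and `w` are distinct vertices of degree 1 in `H`, and all other vertices of `H`
have degree 2 in `H`. -/
def IsPathSubgraph {V : Type} {G : SimpleGraph V} (H : G.Subgraph) (v w : V) : Prop :=
  H.Connected ∧ v ∈ H.verts ∧ w ∈ H.verts ∧ v ≠ w ∧
    (H.neighborSet v).ncard = 1 ∧ (H.neighborSet w).ncard = 1 ∧
    ∀ u ∈ H.verts, u ≠ v → u ≠ w → (H.neighborSet u).ncard = 2

/-- The number of paths between `v` and `w` in `G`, counted as subgraphs. -/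
noncomputable def pathCount {V : Type} [Fintype V] (G : SimpleGraph V) (v w : V) : ℕ :=
  Set.ncard {H : G.Subgraph | IsPathSubgraph H v w}

/-- The graph obtained from `G` by adjoining a new path of length `k` from `v` to `w`
whose `k - 1` internal vertices are new vertices. -/
def pathExtension {V : Type} (G : SimpleGraph V) (v w : V) (k : ℕ) :
    SimpleGraph (V ⊕ Fin (k - 1)) :=
  SimpleGraph.fromRel fun a b =>
    (∃ x y : V, a = Sum.inl x ∧ b = Sum.inl y ∧ G.Adj x y) ∨
    (∃ i : Fin (k - 1), a = Sum.inl v ∧ b = Sum.inr i ∧ i.val = 0) ∨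
    (∃ i j : Fin (k - 1), a = Sum.inr i ∧ b = Sum.inr j ∧ j.val = i.val + 1) ∨
    (∃ i : Fin (k - 1), a = Sum.inr i ∧ b = Sum.inl w ∧ i.val = k - 2)

/-!
Cycles of the extension avoiding the new vertices are exactly the images of the cycles of `G`.
A cycle through a new vertex `xᵢ` has degree 2 there, and `xᵢ` has only two neighbours, so the
cycle contains the whole new path; deleting the new vertices leaves a subgraph of `G` in which `v`
and `w` have degree 1 and all other vertices degree 2. By the handshake lemma in the component of
`v`, this subgraph joins `v` to `w`, so contracting the new path onto `v` shows that it is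
connected: it is a `v`–`w` path. Conversely, every `v`–`w` path closes up with the new path to a
cycle.
-/

open Relation

namespace SimpleGraph

theorem reachable_of_odd_ncard_neighborSet {V : Type*} [Finite V] {Γ : SimpleGraph V} {a b : V}
    (ha : Odd (Γ.neighborSet a).ncard)
    (hodd : ∀ u, u ≠ a → Odd (Γ.neighborSet u).ncard → u = b) : Γ.Reachable a b := by
  classical
  have := Fintype.ofFinite V
  -- the handshake lemma, applied to the connected component of `a`
  set C := Γ.connectedComponentMk a
  have hdegree : ∀ u, C.toSimpleGraph.spanningCoe.degree u =
      if u ∈ C.supp then (Γ.neighborSet u).ncard else 0 := by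
    intro u
    rw [← card_neighborSet_eq_degree, ← Nat.card_eq_fintype_card, Nat.card_coe_set_eq]
    split_ifs with hu
    · congr 1
      ext x
      simp [C.adj_spanningCoe_toSimpleGraph, hu]
    · rw [Set.ncard_eq_zero]
      ext x
      simp [C.adj_spanningCoe_toSimpleGraph, hu]
  obtain ⟨u, hua, hu⟩ := C.toSimpleGraph.spanningCoe.exists_ne_odd_degree_of_exists_odd_degree a
    (by rwa [hdegree, if_pos (show a ∈ C.supp from rfl)])
  rw [hdegree] at hu
  split_ifs at hu with huC
  · exact hodd u hua hu ▸ (ConnectedComponent.exact huC).symm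
  · exact absurd hu Nat.not_odd_zero

namespace Subgraph

variable {V W : Type*} {G : SimpleGraph V} {G' : SimpleGraph W}

theorem connected_iff_forall_reflTransGen {H : G.Subgraph} :
    H.Connected ↔ H.verts.Nonempty ∧ ∀ x ∈ H.verts, ∀ y ∈ H.verts, ReflTransGen H.Adj x y := by
  rw [Subgraph.connected_iff, Subgraph.preconnected_iff, and_comm]
  refine and_congr_right fun _ => ⟨fun h x hx y hy => ?_, fun h x y => ?_⟩
  · exact ((reachable_iff_reflTransGen _ _).1 (h ⟨x, hx⟩ ⟨y, hy⟩)).lift Subtype.val fun _ _ => id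
  · obtain ⟨y, hy⟩ := y
    induction h x x.2 y hy with
    | refl => exact .rfl
    | tail _ hbc ih => exact (ih (H.edge_vert hbc)).trans (Adj.reachable hbc)

theorem reflTransGen_adj_of_ncard_neighborSet [Finite V] {H : G.Subgraph} {a b : V}
    (ha : (H.neighborSet a).ncard = 1)
    (h : ∀ u ∈ H.verts, u ≠ a → u ≠ b → (H.neighborSet u).ncard = 2) :
    ReflTransGen H.Adj a b := by
  refine (reachable_iff_reflTransGen _ _).1 <|
    reachable_of_odd_ncard_neighborSet (Γ := H.spanningCoe) (ha ▸ odd_one) ?_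
  intro u hua hodd
  by_contra hub
  by_cases hu : u ∈ H.verts
  · exact Nat.not_odd_iff_even.2 (h u hu hua hub ▸ even_two) hodd
  · have hempty : H.spanningCoe.neighborSet u = ∅ :=
      Set.eq_empty_of_forall_notMem fun b hb => hu (H.edge_vert hb)
    rw [hempty, Set.ncard_empty] at hodd
    exact Nat.not_odd_zero hodd

theorem adj_of_ncard_neighborSet_le {H : G.Subgraph} {x y : V} (hfin : (G.neighborSet x).Finite)
    (hle : (G.neighborSet x).ncard ≤ (H.neighborSet x).ncard) (hxy : G.Adj x y) : H.Adj x y := by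
  have heq := Set.eq_of_subset_of_ncard_le (H.neighborSet_subset x) hle hfin
  rw [← SimpleGraph.mem_neighborSet, ← heq] at hxy
  exact hxy

theorem neighborSet_map_of_injective {f : G →g G'} (hf : Function.Injective f) (H : G.Subgraph)
    (x : V) : (H.map f).neighborSet (f x) = f '' H.neighborSet x := by
  ext b
  simp [Relation.Map, hf.eq_iff]

theorem comap_map_of_injective {f : G →g G'} (hf : Function.Injective f) (H : G.Subgraph) :
    (H.map f).comap f = H := by
  ext x y
  · simp [hf.mem_set_image]
  · simp only [comap_adj, map_adj, Relation.Map, hf.eq_iff, exists_eq_right_right, exists_eq_right]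
    exact and_iff_right_of_imp fun h => H.adj_sub h

theorem connected_map_iff {f : G →g G'} (hf : Function.Injective f) {H : G.Subgraph} :
    (H.map f).Connected ↔ H.Connected := by
  simp only [connected_iff_forall_reflTransGen, map_verts, Set.image_nonempty,
    Set.forall_mem_image]
  refine and_congr_right fun ⟨x₀, _⟩ => forall₂_congr fun x _ => forall₂_congr fun y _ =>
    ⟨fun h => ?_, fun h => h.lift f fun a b hab => ⟨a, b, hab, rfl, rfl⟩⟩
  have := Nonempty.intro x₀
  have hinv := Function.leftInverse_invFun hf
  rw [← hinv x, ← hinv y]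
  refine h.lift' (Function.invFun f) ?_
  rintro _ _ ⟨a, b, hab, rfl, rfl⟩
  simpa only [Function.onFun, hinv a, hinv b] using ReflTransGen.single hab

theorem map_comap_of_verts_subset_range (f : G ↪g G') {H : G'.Subgraph}
    (h : H.verts ⊆ Set.range f) : (H.comap f.toHom).map f.toHom = H := by
  ext a b
  · simp only [map_verts, comap_verts, RelEmbedding.coe_toRelHom]
    refine ⟨by rintro ⟨x, hx, rfl⟩; exact hx, fun ha => ?_⟩
    obtain ⟨x, rfl⟩ := h ha
    exact ⟨x, ha, rfl⟩
  · simp only [map_adj, RelEmbedding.coe_toRelHom]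
    refine ⟨by rintro ⟨x, y, ⟨-, hxy⟩, rfl, rfl⟩; exact hxy, fun hab => ?_⟩
    obtain ⟨x, rfl⟩ := h (H.edge_vert hab)
    obtain ⟨y, rfl⟩ := h (H.edge_vert hab.symm)
    exact ⟨x, y, ⟨f.map_adj_iff.1 (H.adj_sub hab), hab⟩, rfl, rfl⟩

end Subgraph

end SimpleGraph

theorem isCycleSubgraph_map_iff {V W : Type} {G : SimpleGraph V} {G' : SimpleGraph W}
    {f : G →g G'} (hf : Function.Injective f) {H : G.Subgraph} :
    IsCycleSubgraph (H.map f) ↔ IsCycleSubgraph H := by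
  simp only [IsCycleSubgraph, Subgraph.map_verts, Set.image_nonempty, Set.forall_mem_image,
    Subgraph.connected_map_iff hf, Subgraph.neighborSet_map_of_injective hf,
    Set.ncard_image_of_injective _ hf]

section PathExtension

variable {V : Type} {G : SimpleGraph V} {v w : V} {k : ℕ}

@[simp]
theorem pathExtension_adj_inl_inl {x y : V} :
    (pathExtension G v w k).Adj (.inl x) (.inl y) ↔ G.Adj x y := by
  simp +contextual [pathExtension, G.adj_comm, G.ne_of_adj]

@[simp]
theorem pathExtension_adj_inl_inr {x : V} {i : Fin (k - 1)} :
    (pathExtension G v w k).Adj (.inl x) (.inr i) ↔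
      x = v ∧ i.val = 0 ∨ x = w ∧ i.val = k - 2 := by
  simp [pathExtension, eq_comm]

@[simp]
theorem pathExtension_adj_inr_inl {x : V} {i : Fin (k - 1)} :
    (pathExtension G v w k).Adj (.inr i) (.inl x) ↔
      x = v ∧ i.val = 0 ∨ x = w ∧ i.val = k - 2 := by
  rw [adj_comm, pathExtension_adj_inl_inr]

@[simp]
theorem pathExtension_adj_inr_inr {i j : Fin (k - 1)} :
    (pathExtension G v w k).Adj (.inr i) (.inr j) ↔ (pathGraph (k - 1)).Adj i j := by
  grind [pathExtension, fromRel_adj, pathGraph_adj]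

theorem ncard_neighborSet_pathExtension_inr (hvw : v ≠ w) (i : Fin (k - 1)) :
    ((pathExtension G v w k).neighborSet (.inr i)).ncard = 2 := by
  have hi := i.isLt
  rw [Set.ncard_eq_two]
  refine ⟨if i.val = 0 then .inl v else .inr ⟨i.val - 1, by omega⟩,
    if h : i.val = k - 2 then .inl w else .inr ⟨i.val + 1, by omega⟩, ?_, ?_⟩
  · split_ifs <;> simp [hvw, Fin.ext_iff]
  · ext (x | j) <;> simp only [mem_neighborSet, pathExtension_adj_inr_inl,
      pathExtension_adj_inr_inr, pathGraph_adj, Set.mem_insert_iff, Set.mem_singleton_iff] <;>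
      split_ifs <;> grind

end PathExtension

namespace pathExtension

variable {V : Type} {G : SimpleGraph V} {v w : V} {k : ℕ}

def inl (G : SimpleGraph V) (v w : V) (k : ℕ) : G ↪g pathExtension G v w k where
  toEmbedding := .inl
  map_rel_iff' := pathExtension_adj_inl_inl

@[simp]
theorem inl_apply (x : V) : inl G v w k x = .inl x := rfl

/-- The new path `v, x₁, …, x_{k-1}, w`: its edges are those with an endpoint outside `G`. -/
def ear (G : SimpleGraph V) (v w : V) (k : ℕ) : (pathExtension G v w k).Subgraph where
  verts := {.inl v, .inl w} ∪ Set.range .inr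
  Adj a b := (pathExtension G v w k).Adj a b ∧ (a.isRight ∨ b.isRight)
  adj_sub h := h.1
  edge_vert := by
    rintro (x | i) (y | j) ⟨hab, h⟩ <;> grind [pathExtension_adj_inl_inr]
  symm := ⟨fun _ _ h => ⟨h.1.symm, h.2.symm⟩⟩

theorem neighborSet_ear_inr (i : Fin (k - 1)) :
    (ear G v w k).neighborSet (.inr i) = (pathExtension G v w k).neighborSet (.inr i) := by
  ext b
  simp [ear]

theorem neighborSet_ear_left (hvw : v ≠ w) (hk : 2 ≤ k) :
    (ear G v w k).neighborSet (.inl v) = {.inr ⟨0, by omega⟩} := by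
  ext (y | j) <;> simp [ear, hvw, Fin.ext_iff]

theorem neighborSet_ear_right (hvw : v ≠ w) (hk : 2 ≤ k) :
    (ear G v w k).neighborSet (.inl w) = {.inr ⟨k - 2, by omega⟩} := by
  ext (y | j) <;> simp [ear, hvw.symm, Fin.ext_iff]

theorem neighborSet_ear_inl_of_ne {x : V} (hxv : x ≠ v) (hxw : x ≠ w) :
    (ear G v w k).neighborSet (.inl x) = ∅ := by
  ext (y | j) <;> simp [ear, hxv, hxw]

theorem ear_connected (hk : 2 ≤ k) : (ear G v w k).Connected := by
  have hstart : (ear G v w k).Adj (.inl v) (.inr ⟨0, by omega⟩) := by simp [ear]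
  have hend : (ear G v w k).Adj (.inr ⟨k - 2, by omega⟩) (.inl w) := by simp [ear]
  have hreach : ∀ a ∈ (ear G v w k).verts, ReflTransGen (ear G v w k).Adj (.inl v) a := by
    have hinr (j : Fin (k - 1)) : ReflTransGen (ear G v w k).Adj (.inl v) (.inr j) :=
      .head hstart <| ((reachable_iff_reflTransGen _ _).1 (pathGraph_preconnected _ _ j)).lift
        Sum.inr fun i j h => ⟨pathExtension_adj_inr_inr.2 h, by simp⟩
    rintro _ ((rfl | rfl) | ⟨j, rfl⟩)
    · exact .refl
    · exact (hinr _).tail hend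
    · exact hinr j
  have : Std.Symm (ear G v w k).Adj := ⟨fun _ _ h => h.symm⟩
  rw [Subgraph.connected_iff_forall_reflTransGen]
  exact ⟨⟨_, Or.inl (Or.inl rfl)⟩, fun a ha b hb =>
    (Std.Symm.symm _ _ (hreach a ha)).trans (hreach b hb)⟩

theorem ear_le_of_isCycleSubgraph (hvw : v ≠ w) {H : (pathExtension G v w k).Subgraph}
    (hH : IsCycleSubgraph H) {i : Fin (k - 1)} (hi : .inr i ∈ H.verts) : ear G v w k ≤ H := by
  have hfull : ∀ j : Fin (k - 1), .inr j ∈ H.verts →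
      ∀ b, (pathExtension G v w k).Adj (.inr j) b → H.Adj (.inr j) b := by
    intro j hj b
    have hcard := ncard_neighborSet_pathExtension_inr (G := G) hvw j
    exact Subgraph.adj_of_ncard_neighborSet_le (Set.finite_of_ncard_ne_zero (by simp [hcard]))
      (by rw [hcard, hH.2.2 _ hj])
  have hall : ∀ j : Fin (k - 1), .inr j ∈ H.verts := by
    intro j
    induction (reachable_iff_reflTransGen _ _).1 (pathGraph_preconnected _ i j) with
    | refl => exact hi
    | tail _ hbc ih => exact H.edge_vert (hfull _ ih _ (pathExtension_adj_inr_inr.2 hbc)).symm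
  refine ⟨?_, ?_⟩
  · rintro _ ((rfl | rfl) | ⟨j, rfl⟩)
    · exact H.edge_vert (hfull ⟨0, i.pos⟩ (hall _) (.inl v) (by simp)).symm
    · exact H.edge_vert (hfull ⟨k - 2, by have := i.isLt; omega⟩ (hall _) (.inl w) (by simp)).symm
    · exact hall j
  · rintro (x | j) (y | j') ⟨hab, h⟩
    · simp at h
    · exact (hfull j' (hall j') _ hab.symm).symm
    all_goals exact hfull j (hall j) _ hab

theorem map_comap_sup_ear {H : (pathExtension G v w k).Subgraph} (h : ear G v w k ≤ H) :
    (H.comap (inl G v w k).toHom).map (inl G v w k).toHom ⊔ ear G v w k = H := by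
  refine le_antisymm (sup_le ((Subgraph.map_le_iff_le_comap _ _ _).2 le_rfl) h) ⟨?_, ?_⟩
  · rintro (x | i) ha
    · exact Or.inl ⟨x, ha, rfl⟩
    · exact Or.inr (Or.inr ⟨i, rfl⟩)
  · rintro (x | i) (y | j) hab
    · exact Or.inl ⟨x, y, ⟨(pathExtension_adj_inl_inl).1 (H.adj_sub hab), hab⟩, rfl, rfl⟩
    all_goals exact Or.inr ⟨H.adj_sub hab, by simp⟩

theorem comap_map_sup_ear {P : G.Subgraph} (hv : v ∈ P.verts) (hw : w ∈ P.verts) :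
    (P.map (inl G v w k).toHom ⊔ ear G v w k).comap (inl G v w k).toHom = P := by
  ext x y
  · simpa [ear] using fun h : x = v ∨ x = w => h.elim (· ▸ hv) (· ▸ hw)
  · simpa [ear, Relation.Map] using @P.adj_sub x y

theorem ncard_neighborSet_map_sup_ear_inl [Finite V] (P : G.Subgraph) (x : V) :
    ((P.map (inl G v w k).toHom ⊔ ear G v w k).neighborSet (.inl x)).ncard =
      (P.neighborSet x).ncard + ((ear G v w k).neighborSet (.inl x)).ncard := by
  have hmap : (P.map (inl G v w k).toHom).neighborSet (.inl x) = .inl '' P.neighborSet x :=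
    Subgraph.neighborSet_map_of_injective (inl G v w k).injective P x
  rw [Subgraph.neighborSet_sup, Set.ncard_union_eq, hmap,
    Set.ncard_image_of_injective _ Sum.inl_injective]
  rw [hmap, Set.disjoint_left]
  rintro _ ⟨y, -, rfl⟩ ⟨-, h⟩
  simp at h

theorem ncard_neighborSet_map_sup_ear_inr (hvw : v ≠ w) (P : G.Subgraph) (i : Fin (k - 1)) :
    ((P.map (inl G v w k).toHom ⊔ ear G v w k).neighborSet (.inr i)).ncard = 2 := by
  have hmap : (P.map (inl G v w k).toHom).neighborSet (.inr i) = ∅ := by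
    ext; simp [Relation.Map]
  rw [Subgraph.neighborSet_sup, hmap, Set.empty_union, neighborSet_ear_inr,
    ncard_neighborSet_pathExtension_inr hvw]

theorem connected_map_sup_ear (hk : 2 ≤ k) {P : G.Subgraph} (hP : P.Connected)
    (hv : v ∈ P.verts) : (P.map (inl G v w k).toHom ⊔ ear G v w k).Connected :=
  Subgraph.connected_sup ((Subgraph.connected_map_iff (inl G v w k).injective).2 hP).preconnected
    (ear_connected hk).preconnected ⟨.inl v, ⟨v, hv, rfl⟩, Or.inl (Or.inl rfl)⟩

theorem connected_of_connected_map_sup_ear {P : G.Subgraph}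
    (h : (P.map (inl G v w k).toHom ⊔ ear G v w k).Connected) (hv : v ∈ P.verts)
    (hvw : ReflTransGen P.Adj v w) : P.Connected := by
  have : Std.Symm P.Adj := ⟨fun _ _ h => h.symm⟩
  rw [Subgraph.connected_iff_forall_reflTransGen] at h ⊢
  refine ⟨⟨v, hv⟩, fun x hx y hy => ?_⟩
  -- contract the new path onto `v`
  refine (h.2 (.inl x) (Or.inl ⟨x, hx, rfl⟩) (.inl y) (Or.inl ⟨y, hy, rfl⟩)).lift'
    (Sum.elim id fun _ => v) ?_
  rintro a b (⟨x, y, hxy, rfl, rfl⟩ | ⟨hab, h⟩)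
  · exact .single hxy
  rcases a with x | i <;> rcases b with y | j
  · simp at h
  · rcases pathExtension_adj_inl_inr.1 hab with ⟨rfl, -⟩ | ⟨rfl, -⟩
    · exact .refl
    · exact Std.Symm.symm _ _ hvw
  · rcases pathExtension_adj_inr_inl.1 hab with ⟨rfl, -⟩ | ⟨rfl, -⟩
    · exact .refl
    · exact hvw
  · exact .refl

theorem forall_ncard_neighborSet_map_sup_ear_eq_two_iff [Finite V] (hvw : v ≠ w)
    {P : G.Subgraph} (hv : v ∈ P.verts) (hw : w ∈ P.verts) :
    (∀ a ∈ (P.map (inl G v w k).toHom ⊔ ear G v w k).verts,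
      ((P.map (inl G v w k).toHom ⊔ ear G v w k).neighborSet a).ncard = 2) ↔
      ∀ x ∈ P.verts, (P.neighborSet x).ncard + ((ear G v w k).neighborSet (.inl x)).ncard = 2 := by
  refine ⟨fun h x hx => ?_, ?_⟩
  · rw [← ncard_neighborSet_map_sup_ear_inl]
    exact h _ (Or.inl ⟨x, hx, rfl⟩)
  · rintro h (x | i) hx
    · rw [ncard_neighborSet_map_sup_ear_inl]
      refine h x ?_
      obtain ⟨x', hx', h⟩ | ((h | h) | ⟨i, h⟩) := hx
      · exact Sum.inl_injective h ▸ hx'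
      · exact Sum.inl_injective h ▸ hv
      · exact Sum.inl_injective h ▸ hw
      · cases h
    · exact ncard_neighborSet_map_sup_ear_inr hvw P i

theorem isCycleSubgraph_map_sup_ear_iff [Finite V] (hvw : v ≠ w) (hk : 2 ≤ k) {P : G.Subgraph}
    (hv : v ∈ P.verts) (hw : w ∈ P.verts) :
    IsCycleSubgraph (P.map (inl G v w k).toHom ⊔ ear G v w k) ↔ IsPathSubgraph P v w := by
  have hv1 : ((ear G v w k).neighborSet (.inl v)).ncard = 1 := by
    rw [neighborSet_ear_left hvw hk, Set.ncard_singleton]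
  have hw1 : ((ear G v w k).neighborSet (.inl w)).ncard = 1 := by
    rw [neighborSet_ear_right hvw hk, Set.ncard_singleton]
  rw [IsCycleSubgraph, forall_ncard_neighborSet_map_sup_ear_eq_two_iff hvw hv hw]
  constructor
  · rintro ⟨-, hconn, h⟩
    have dv : (P.neighborSet v).ncard = 1 := by have := h v hv; omega
    have dw : (P.neighborSet w).ncard = 1 := by have := h w hw; omega
    have dother : ∀ u ∈ P.verts, u ≠ v → u ≠ w → (P.neighborSet u).ncard = 2 :=
      fun u hu huv huw => by simpa [neighborSet_ear_inl_of_ne huv huw] using h u hu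
    exact ⟨connected_of_connected_map_sup_ear hconn hv
      (Subgraph.reflTransGen_adj_of_ncard_neighborSet dv dother), hv, hw, hvw, dv, dw, dother⟩
  · rintro ⟨hconn, -, -, -, dv, dw, dother⟩
    refine ⟨⟨.inl v, Or.inl ⟨v, hv, rfl⟩⟩, connected_map_sup_ear hk hconn hv, fun x hx => ?_⟩
    by_cases hxv : x = v
    · rw [hxv, dv, hv1]
    by_cases hxw : x = w
    · rw [hxw, dw, hw1]
    rw [dother x hx hxv hxw, neighborSet_ear_inl_of_ne hxv hxw, Set.ncard_empty]

theorem image_map_setOf_isCycleSubgraph :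
    Subgraph.map (inl G v w k).toHom '' {H | IsCycleSubgraph H} =
      {H | IsCycleSubgraph H} ∩ {H | H.verts ⊆ Set.range Sum.inl} := by
  ext H
  constructor
  · rintro ⟨H, hH, rfl⟩
    exact ⟨(isCycleSubgraph_map_iff (inl G v w k).injective).2 hH, Set.image_subset_range _ _⟩
  · rintro ⟨hH, hsub⟩
    have hmap := Subgraph.map_comap_of_verts_subset_range (inl G v w k) hsub
    exact ⟨_, (isCycleSubgraph_map_iff (inl G v w k).injective).1 (by rwa [hmap]), hmap⟩

theorem image_map_sup_ear_setOf_isPathSubgraph [Finite V] (hvw : v ≠ w) (hk : 2 ≤ k) :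
    (fun P : G.Subgraph => P.map (inl G v w k).toHom ⊔ ear G v w k) ''
        {P | IsPathSubgraph P v w} =
      {H | IsCycleSubgraph H} \ {H | H.verts ⊆ Set.range Sum.inl} := by
  ext H
  constructor
  · rintro ⟨P, hP, rfl⟩
    refine ⟨(isCycleSubgraph_map_sup_ear_iff hvw hk hP.2.1 hP.2.2.1).2 hP, fun hsub => ?_⟩
    obtain ⟨x, hx⟩ := hsub (Or.inr (Or.inr ⟨⟨0, by omega⟩, rfl⟩))
    cases hx
  · rintro ⟨hH, hnot⟩
    obtain ⟨a, ha, hna⟩ := Set.not_subset.1 hnot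
    obtain ⟨i, rfl⟩ : ∃ i, a = .inr i := by
      rcases a with x | i
      · exact absurd ⟨x, rfl⟩ hna
      · exact ⟨i, rfl⟩
    have hear := ear_le_of_isCycleSubgraph hvw hH ha
    have hH' := map_comap_sup_ear hear
    have hv : v ∈ (H.comap (inl G v w k).toHom).verts := hear.1 (Or.inl (Or.inl rfl))
    have hw : w ∈ (H.comap (inl G v w k).toHom).verts := hear.1 (Or.inl (Or.inr rfl))
    exact ⟨_, (isCycleSubgraph_map_sup_ear_iff hvw hk hv hw).1 (by rwa [hH']), hH'⟩

theorem injective_map_inl : Function.Injective (Subgraph.map (inl G v w k).toHom) :=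
  Function.LeftInverse.injective (Subgraph.comap_map_of_injective (inl G v w k).injective)

theorem injOn_map_sup_ear :
    Set.InjOn (fun P : G.Subgraph => P.map (inl G v w k).toHom ⊔ ear G v w k)
      {P | IsPathSubgraph P v w} := fun P hP Q hQ hPQ => by
  rw [← comap_map_sup_ear (k := k) hP.2.1 hP.2.2.1, ← comap_map_sup_ear (k := k) hQ.2.1 hQ.2.2.1]
  exact congrArg _ hPQ

end pathExtension

/-- Ear-Path Lemma: adjoining a new ear of length `k ≥ 2` with endpoints `v ≠ w` and new
internal vertices creates as many new cycles as there are `vw`-paths in `G`. -/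
theorem cycleCount_pathExtension {V : Type} [Fintype V] (G : SimpleGraph V) (v w : V)
    (hvw : v ≠ w) (k : ℕ) (hk : 2 ≤ k) :
    cycleCount (pathExtension G v w k) = cycleCount G + pathCount G v w := by
  rw [cycleCount, cycleCount, pathCount,
    ← Set.ncard_inter_add_ncard_sdiff_eq_ncard _ {H | H.verts ⊆ Set.range Sum.inl},
    ← pathExtension.image_map_setOf_isCycleSubgraph,
    ← pathExtension.image_map_sup_ear_setOf_isPathSubgraph hvw hk,
    Set.ncard_image_of_injective _ pathExtension.injective_map_inl,
    pathExtension.injOn_map_sup_ear.ncard_image]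
end

section
/- Let G be a finite 2-connected simple graph and let v, w be distinct nonadjacent vertices of G. Let G' be the graph obtained from G by adding the edge vw. Then the cycle count of G' is at least the cycle count of G plus 2. -/
open SimpleGraph

/-!
Let `v, w` be nonadjacent. Any `v`–`w` path `P` of `G` passes through an inner vertex `u`, and
since `G - u` is connected there is a second `v`–`w` path `Q` avoiding `u`. Closing `P` and `Q`
with the new edge `vw` gives two distinct cycles of `G + vw`, and neither is a cycle of `G`
since both use the new edge.
-/

namespace SimpleGraph

variable {V : Type} {G G' : SimpleGraph V}

lemma Walk.IsCycle.isCycleSubgraph_toSubgraph_s10 {u : V} {c : G.Walk u u} (hc : c.IsCycle) :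
    IsCycleSubgraph c.toSubgraph :=
  ⟨⟨u, c.start_mem_verts_toSubgraph⟩, c.toSubgraph_connected, fun _ hx =>
    hc.ncard_neighborSet_toSubgraph_eq_two ((c.mem_verts_toSubgraph).mp hx)⟩

lemma Walk.IsPath.isCycle_cons_mapLe (h : G ≤ G') {v w : V} {P : G.Walk v w} (hP : P.IsPath)
    (hwv : G'.Adj w v) (hnew : ¬ G.Adj w v) : (Walk.cons hwv (P.mapLe h)).IsCycle := by
  refine Path.cons_isCycle ⟨P.mapLe h, hP.mapLe h⟩ hwv fun he => hnew ?_
  rw [Walk.edges_mapLe_eq_edges] at he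
  exact P.adj_of_mem_edges he

def Subgraph.ofLE (h : G ≤ G') (H : G.Subgraph) : G'.Subgraph where
  verts := H.verts
  Adj := H.Adj
  adj_sub hab := h (H.adj_sub hab)
  edge_vert := H.edge_vert
  symm := H.symm

lemma Subgraph.ofLE_injective (h : G ≤ G') : Function.Injective (Subgraph.ofLE h) := by
  intro H₁ H₂ hH
  exact Subgraph.ext (congrArg (·.verts) hH) (congrArg (·.Adj) hH)

lemma IsCycleSubgraph.ofLE (h : G ≤ G') {H : G.Subgraph} (hH : IsCycleSubgraph H) :
    IsCycleSubgraph (Subgraph.ofLE h H) :=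
  let ⟨hne, ⟨hconn⟩, hdeg⟩ := hH
  ⟨hne, ⟨hconn⟩, hdeg⟩

lemma cycleCount_add_card_le_of_le [Fintype V] (h : G ≤ G') (s : Finset G'.Subgraph)
    (hs : ∀ H ∈ s, IsCycleSubgraph H ∧ ∃ x y, H.Adj x y ∧ ¬ G.Adj x y) :
    cycleCount G + s.card ≤ cycleCount G' := by
  set old := Subgraph.ofLE h '' {H : G.Subgraph | IsCycleSubgraph H}
  have hdisj : Disjoint old (s : Set G'.Subgraph) := by
    rw [Set.disjoint_right]
    rintro _ hH ⟨K, -, rfl⟩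
    obtain ⟨x, y, hxy, hG⟩ := (hs _ hH).2
    exact hG (K.adj_sub hxy)
  have hsub : old ∪ s ⊆ {H : G'.Subgraph | IsCycleSubgraph H} := by
    rintro _ (⟨K, hK, rfl⟩ | hH)
    · exact hK.ofLE h
    · exact (hs _ hH).1
  calc cycleCount G + s.card = (old ∪ s).ncard := by
        rw [Set.ncard_union_eq hdisj, Set.ncard_image_of_injective _ (Subgraph.ofLE_injective h),
          Set.ncard_coe_finset]
        rfl
    _ ≤ cycleCount G' := Set.ncard_le_ncard hsub

lemma exists_isPath_notMem_support {u v w : V} (hsep : (G.induce {x | x ≠ u}).Connected)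
    (hv : v ≠ u) (hw : w ≠ u) : ∃ Q : G.Walk v w, Q.IsPath ∧ u ∉ Q.support := by
  classical
  let Q₀ : (G.induce {x | x ≠ u}).Path ⟨v, hv⟩ ⟨w, hw⟩ := (hsep.preconnected _ _).some.toPath
  let f := Embedding.induce (G := G) {x | x ≠ u}
  have hu : u ∉ (Q₀.1.map f.toHom).support := by
    rw [Walk.support_map, List.mem_map]
    rintro ⟨⟨x, hx⟩, -, hxu⟩
    exact hx hxu
  exact ⟨_, Q₀.2.map f.injective, hu⟩

lemma exists_isPath_mem_support_isPath_notMem_support {v w : V} (hvw : v ≠ w)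
    (hadj : ¬ G.Adj v w) (hreach : G.Reachable v w)
    (hsep : ∀ u, (G.induce {x | x ≠ u}).Connected) :
    ∃ (u : V) (P Q : G.Walk v w), P.IsPath ∧ Q.IsPath ∧ u ∈ P.support ∧ u ∉ Q.support := by
  classical
  obtain ⟨P, hP⟩ := hreach.some.toPath
  obtain ⟨u, hvu, P', rfl⟩ := Walk.exists_eq_cons_of_ne hvw P
  obtain ⟨Q, hQ, huQ⟩ :=
    exists_isPath_notMem_support (hsep u) hvu.ne fun hwu : w = u => hadj (hwu ▸ hvu)
  exact ⟨u, _, Q, hP, hQ, by simp, huQ⟩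

end SimpleGraph

/-- Adding an edge between two distinct nonadjacent vertices of a finite 2-connected
simple graph creates at least two new cycles. -/
theorem cycleCount_addEdge_ge {V : Type} [Fintype V] (G : SimpleGraph V)
    (hG : IsTwoConnected G) (v w : V) (hvw : v ≠ w) (hadj : ¬ G.Adj v w) :
    cycleCount G + 2 ≤ cycleCount (G ⊔ SimpleGraph.fromEdgeSet {s(v, w)}) := by
  classical
  obtain ⟨-, hconn, hsep⟩ := hG
  obtain ⟨u, P, Q, hP, hQ, huP, huQ⟩ :=
    exists_isPath_mem_support_isPath_notMem_support hvw hadj (hconn v w) hsep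
  have hle : G ≤ G ⊔ fromEdgeSet {s(v, w)} := le_sup_left
  have hwv : (G ⊔ fromEdgeSet {s(v, w)}).Adj w v := by simp [hvw.symm, Sym2.eq_swap]
  let C (R : G.Walk v w) := (Walk.cons hwv (R.mapLe hle)).toSubgraph
  have hC (R : G.Walk v w) (hR : R.IsPath) :
      IsCycleSubgraph (C R) ∧ ∃ x y, (C R).Adj x y ∧ ¬ G.Adj x y :=
    ⟨(hR.isCycle_cons_mapLe hle hwv fun h => hadj h.symm).isCycleSubgraph_toSubgraph_s10,
      w, v, by simp [C], fun h => hadj h.symm⟩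
  have hne : C P ≠ C Q := fun h => by
    have hu : u ∈ (C Q).verts := h ▸ (by simp [C, huP])
    simp only [C, Walk.mem_verts_toSubgraph, Walk.support_cons, Walk.support_mapLe_eq_support,
      List.mem_cons] at hu
    rcases hu with rfl | hu
    · exact huQ Q.end_mem_support
    · exact huQ hu
  calc cycleCount G + 2 = cycleCount G + ({C P, C Q} : Finset _).card := by
        rw [Finset.card_pair hne]
    _ ≤ _ := cycleCount_add_card_le_of_le hle _ (by simpa using ⟨hC P hP, hC Q hQ⟩)
end

section
/- For every integer k ≥ 3, the ring of k triangles — the simple graph with vertices a_0, ..., a_{k-1}, b_0, ..., b_{k-1} and edges a_i a_{i+1}, a_i b_i, and b_i a_{i+1} for all i (indices modulo k) — has exactly k + 2^k cycles. -/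
open SimpleGraph

/-- The ring of `k` triangles: the simple graph on vertices `a_0, …, a_{k-1}`
(the `Sum.inl` vertices) and `b_0, …, b_{k-1}` (the `Sum.inr` vertices), with edges
`a_i a_{i+1}`, `a_i b_i` and `b_i a_{i+1}` for all `i`, indices modulo `k`. -/
def ringOfTriangles (k : ℕ) : SimpleGraph (Fin k ⊕ Fin k) :=
  SimpleGraph.fromRel fun a b =>
    (∃ i j : Fin k, a = Sum.inl i ∧ b = Sum.inl j ∧ (i.val + 1) % k = j.val) ∨
    (∃ i : Fin k, a = Sum.inl i ∧ b = Sum.inr i) ∨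
    (∃ i j : Fin k, a = Sum.inr i ∧ b = Sum.inl j ∧ (i.val + 1) % k = j.val)

/-!
A vertex `b_i` has degree two, so a cycle through `b_i` contains the path `a_i b_i a_{i+1}`; if it
also contains the edge `a_i a_{i+1}` it is the triangle on `a_i, a_{i+1}, b_i`. A cycle that is
not a triangle must therefore leave every `a_i` it visits forwards in exactly one way, by the edge
`a_i a_{i+1}` or by the path through `b_i`: otherwise both of its edges at `a_i` point backwards and
close up the triangle behind `a_i`. Hence it visits every `a_i`, and it is determined by the set
`S` of indices at which it passes through `b_i`; every `S` occurs. This gives `k` triangles and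
`2^k` long cycles. Each identification is made by exhibiting one cycle inside another: a cycle
contained in a cycle equals it, because equal degrees force equal neighbourhoods.
-/

namespace Fin

variable {k : ℕ} [NeZero k]

theorem val_add_one_mod_eq_iff (i j : Fin k) : (i.val + 1) % k = j.val ↔ i + 1 = j := by
  rw [Fin.ext_iff, Fin.val_add, Fin.val_one', Nat.add_mod_mod]

theorem add_one_ne_self (hk : 2 ≤ k) (i : Fin k) : i + 1 ≠ i := by
  simp only [ne_eq, add_eq_left, Fin.one_eq_zero_iff]
  omega

theorem sub_one_ne_self (hk : 2 ≤ k) (i : Fin k) : i - 1 ≠ i := by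
  rw [Ne, sub_eq_self, Fin.one_eq_zero_iff]
  omega

theorem add_one_ne_sub_one (hk : 3 ≤ k) (i : Fin k) : i + 1 ≠ i - 1 := by
  intro h
  have h2 : (1 : Fin k) + 1 = 0 := by
    calc (1 : Fin k) + 1 = i + 1 - (i - 1) := by abel
    _ = 0 := by rw [h, sub_self]
  rw [Fin.ext_iff, Fin.val_add, Fin.val_one', Nat.mod_eq_of_lt (a := 1) (by omega),
    Nat.mod_eq_of_lt (by omega)] at h2
  simp at h2

open Fin.NatCast in
theorem cyclic_induction {P : Fin k → Prop} {m : Fin k} (hm : P m) (h : ∀ i, P i → P (i + 1))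
    (i : Fin k) : P i := by
  have key : ∀ n : ℕ, P (m + (n : Fin k)) := by
    intro n
    induction n with
    | zero => simpa using hm
    | succ n ih => simpa only [Nat.cast_succ, ← add_assoc] using h _ ih
  simpa using key (i - m).val

end Fin

namespace SimpleGraph.Subgraph

variable {V : Type} {G : SimpleGraph V} {H : G.Subgraph}

theorem Connected.verts_subset_of_adj_closed (hH : H.Connected) {W : Set V} {v : V}
    (hvH : v ∈ H.verts) (hvW : v ∈ W) (hW : ∀ x ∈ W, ∀ y, H.Adj x y → y ∈ W) :
    H.verts ⊆ W := by
  suffices ∀ {x y : H.verts}, H.coe.Walk x y → (x : V) ∈ W → (y : V) ∈ W from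
    fun w hw => this (hH.preconnected ⟨v, hvH⟩ ⟨w, hw⟩).some hvW
  intro x y p
  induction p with
  | nil => exact id
  | cons h _ ih => exact fun hx => ih (hW _ hx _ h)

theorem connected_of_forall_reachable {v : V} (hv : v ∈ H.verts)
    (h : ∀ w (hw : w ∈ H.verts), H.coe.Reachable ⟨v, hv⟩ ⟨w, hw⟩) : H.Connected :=
  Subgraph.connected_iff'.2 <| (connected_iff_exists_forall_reachable _).2 ⟨_, fun w => h w.1 w.2⟩

theorem ncard_neighborSet_eq_two {v x y : V} (hx : H.Adj v x) (hy : H.Adj v y) (hxy : x ≠ y)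
    (h : ∀ w, H.Adj v w → w = x ∨ w = y) : (H.neighborSet v).ncard = 2 :=
  Set.ncard_eq_two.2 ⟨x, y, hxy, Set.Subset.antisymm h (Set.insert_subset hx (by simpa using hy))⟩

theorem adj_of_neighborSet_subset_pair {v x y : V} (h2 : (H.neighborSet v).ncard = 2)
    (hsub : H.neighborSet v ⊆ {x, y}) : H.Adj v x ∧ H.Adj v y := by
  have heq : H.neighborSet v = {x, y} := Set.eq_of_subset_of_ncard_le hsub <| by
    have := Set.ncard_insert_le x {y}
    rw [Set.ncard_singleton] at this
    omega
  simp only [← H.mem_neighborSet, heq, Set.mem_insert_iff, Set.mem_singleton_iff, true_or,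
    or_true, and_self]

end SimpleGraph.Subgraph

namespace IsCycleSubgraph

variable {V : Type} {G : SimpleGraph V} {H K : G.Subgraph}

/-- Equal degrees make the neighbourhoods in `H` and `K` agree, so `H.verts` is closed under
`K`-adjacency. -/
theorem eq_of_le (hH : IsCycleSubgraph H) (hK : IsCycleSubgraph K) (hle : H ≤ K) : H = K := by
  have hnbr : ∀ v ∈ H.verts, H.neighborSet v = K.neighborSet v := fun v hv =>
    Set.eq_of_subset_of_ncard_le (Subgraph.neighborSet_subset_of_subgraph hle v)
      (by rw [hH.2.2 v hv, hK.2.2 v (hle.1 hv)])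
      (Set.finite_of_ncard_ne_zero (by rw [hK.2.2 v (hle.1 hv)]; simp))
  have hverts : K.verts ⊆ H.verts := by
    obtain ⟨v, hv⟩ := hH.1
    refine hK.2.1.verts_subset_of_adj_closed (hle.1 hv) hv fun x hx y hxy => ?_
    have hy : y ∈ H.neighborSet x := hnbr x hx ▸ hxy
    exact H.edge_vert hy.symm
  refine le_antisymm hle ⟨hverts, fun x y hxy => ?_⟩
  have hy : y ∈ H.neighborSet x := (hnbr x (hverts (K.edge_vert hxy))).symm ▸ hxy
  exact hy

end IsCycleSubgraph

namespace ringOfTriangles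

open Sum

variable {k : ℕ} [NeZero k]

theorem adj_inr_iff {i : Fin k} {v : Fin k ⊕ Fin k} :
    (ringOfTriangles k).Adj (inr i) v ↔ v = inl i ∨ v = inl (i + 1) := by
  simp only [ringOfTriangles, fromRel_adj, Fin.val_add_one_mod_eq_iff]
  cases v <;> aesop

theorem adj_inl_iff (hk : 2 ≤ k) {i : Fin k} {v : Fin k ⊕ Fin k} :
    (ringOfTriangles k).Adj (inl i) v ↔
      v = inl (i + 1) ∨ v = inr i ∨ v = inl (i - 1) ∨ v = inr (i - 1) := by
  simp only [ringOfTriangles, fromRel_adj, Fin.val_add_one_mod_eq_iff]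
  cases v with
  | inl j =>
    simp only [ne_eq, inl.injEq, ↓existsAndEq, and_true, exists_eq_left', reduceCtorEq, and_false,
      exists_const, false_and, or_self, or_false, false_or]
    rw [eq_sub_iff_add_eq]
    constructor
    · rintro ⟨-, h | h⟩
      exacts [Or.inl h, Or.inr h.symm]
    · rintro (rfl | rfl)
      exacts [⟨(Fin.add_one_ne_self hk i).symm, Or.inl rfl⟩, ⟨Fin.add_one_ne_self hk j, Or.inr rfl⟩]
  | inr j => simp only [← eq_sub_iff_add_eq]; aesop

theorem adj_inl_inl_add_one (hk : 2 ≤ k) (i : Fin k) :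
    (ringOfTriangles k).Adj (inl i) (inl (i + 1)) :=
  (adj_inl_iff hk).2 (Or.inl rfl)

theorem adj_inr_inl (i : Fin k) : (ringOfTriangles k).Adj (inr i) (inl i) :=
  adj_inr_iff.2 (Or.inl rfl)

theorem adj_inr_inl_add_one (i : Fin k) : (ringOfTriangles k).Adj (inr i) (inl (i + 1)) :=
  adj_inr_iff.2 (Or.inr rfl)

def triangle (i : Fin k) : (ringOfTriangles k).Subgraph :=
  (⊤ : (ringOfTriangles k).Subgraph).induce {inl i, inl (i + 1), inr i}

theorem triangle_isCycleSubgraph (hk : 2 ≤ k) (i : Fin k) : IsCycleSubgraph (triangle i) := by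
  have h₁ : (triangle i).Adj (inl i) (inl (i + 1)) := by
    simp [triangle, adj_inl_inl_add_one hk]
  have h₂ : (triangle i).Adj (inr i) (inl i) := by simp [triangle, adj_inr_inl]
  have h₃ : (triangle i).Adj (inr i) (inl (i + 1)) := by simp [triangle, adj_inr_inl_add_one]
  have hsucc := Fin.add_one_ne_self hk i
  have hmem : ∀ {v w}, (triangle i).Adj v w → v ≠ w ∧ w ∈ ({inl i, inl (i + 1), inr i} : Set _) :=
    fun h => ⟨h.ne, h.2.1⟩
  refine ⟨⟨inl i, h₁.fst_mem⟩, ?_, ?_⟩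
  · refine Subgraph.connected_of_forall_reachable h₁.fst_mem ?_
    rintro w (rfl | rfl | rfl)
    exacts [.rfl, h₁.coe.reachable, h₂.symm.coe.reachable]
  · rintro v (rfl | rfl | rfl)
    · refine Subgraph.ncard_neighborSet_eq_two h₁ h₂.symm (by simp) fun w hw => ?_
      obtain ⟨hvw, rfl | rfl | rfl⟩ := hmem hw <;> simp_all
    · refine Subgraph.ncard_neighborSet_eq_two h₁.symm h₃.symm (by simp) fun w hw => ?_
      obtain ⟨hvw, rfl | rfl | rfl⟩ := hmem hw <;> simp_all
    · refine Subgraph.ncard_neighborSet_eq_two h₂ h₃ (by simpa using hsucc.symm) fun w hw => ?_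
      obtain ⟨hvw, rfl | rfl | rfl⟩ := hmem hw <;> simp_all

def longCycle (S : Set (Fin k)) : (ringOfTriangles k).Subgraph where
  verts := Set.range inl ∪ inr '' S
  Adj x y := (ringOfTriangles k).Adj x y ∧ ∃ i,
    (i ∈ S ∧ (s(x, y) = s(inl i, inr i) ∨ s(x, y) = s(inr i, inl (i + 1)))) ∨
      (i ∉ S ∧ s(x, y) = s(inl i, inl (i + 1)))
  adj_sub h := h.1
  edge_vert := by
    rintro x y ⟨-, i, ⟨hi, h | h⟩ | ⟨hi, h⟩⟩ <;>
      rcases Sym2.eq_iff.1 h with ⟨rfl, rfl⟩ | ⟨rfl, rfl⟩ <;> simp [hi]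
  symm := ⟨fun x y h => ⟨h.1.symm, by simpa only [Sym2.eq_swap (a := y)] using h.2⟩⟩

theorem longCycle_adj_inl_iff (hk : 2 ≤ k) {S : Set (Fin k)} {i : Fin k} {w : Fin k ⊕ Fin k} :
    (longCycle S).Adj (inl i) w ↔
      (i ∈ S ∧ w = inr i) ∨ (i ∉ S ∧ w = inl (i + 1)) ∨
        (i - 1 ∈ S ∧ w = inr (i - 1)) ∨ (i - 1 ∉ S ∧ w = inl (i - 1)) := by
  simp only [longCycle, Sym2.eq_iff, adj_inl_iff hk]
  aesop

theorem longCycle_adj_inr_iff {S : Set (Fin k)} {i : Fin k} {w : Fin k ⊕ Fin k} :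
    (longCycle S).Adj (inr i) w ↔ i ∈ S ∧ (w = inl i ∨ w = inl (i + 1)) := by
  simp only [longCycle, Sym2.eq_iff, adj_inr_iff]
  aesop

theorem longCycle_isCycleSubgraph (hk : 3 ≤ k) (S : Set (Fin k)) :
    IsCycleSubgraph (longCycle S) := by
  have hinl : ∀ i, inl i ∈ (longCycle S).verts := fun i => Or.inl ⟨i, rfl⟩
  have hinr : ∀ {i}, i ∈ S → (longCycle S).Adj (inr i) (inl i) := fun hi =>
    longCycle_adj_inr_iff.2 ⟨hi, Or.inl rfl⟩
  have hinr' : ∀ {i}, i ∈ S → (longCycle S).Adj (inr i) (inl (i + 1)) := fun hi =>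
    longCycle_adj_inr_iff.2 ⟨hi, Or.inr rfl⟩
  have hdir : ∀ {i}, i ∉ S → (longCycle S).Adj (inl i) (inl (i + 1)) := fun hi =>
    (longCycle_adj_inl_iff (by omega)).2 (Or.inr (Or.inl ⟨hi, rfl⟩))
  refine ⟨⟨_, hinl 0⟩, ?_, ?_⟩
  · have hreach : ∀ i, (longCycle S).coe.Reachable ⟨_, hinl 0⟩ ⟨_, hinl i⟩ := by
      refine Fin.cyclic_induction .rfl fun i hi => hi.trans ?_
      by_cases hiS : i ∈ S
      · exact (hinr hiS).symm.coe.reachable.trans (hinr' hiS).coe.reachable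
      · exact (hdir hiS).coe.reachable
    refine Subgraph.connected_of_forall_reachable (hinl 0) ?_
    rintro w (⟨i, rfl⟩ | ⟨i, hi, rfl⟩)
    · exact hreach i
    · exact (hreach i).trans (hinr hi).symm.coe.reachable
  · rintro v (⟨i, rfl⟩ | ⟨i, hi, rfl⟩)
    · have hfwd : i + 1 ≠ i - 1 := Fin.add_one_ne_sub_one hk i
      have hbwd : i ≠ i - 1 := (Fin.sub_one_ne_self (by omega) i).symm
      classical
      refine Subgraph.ncard_neighborSet_eq_two
        (x := if i ∈ S then inr i else inl (i + 1))
        (y := if i - 1 ∈ S then inr (i - 1) else inl (i - 1)) ?_ ?_ ?_ fun w hw => ?_ <;>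
      simp only [longCycle_adj_inl_iff (by omega : 2 ≤ k)] at * <;> split_ifs <;> simp_all
    · exact Subgraph.ncard_neighborSet_eq_two (hinr hi) (hinr' hi)
        (by simpa using (Fin.add_one_ne_self (by omega) i).symm)
        fun w hw => (longCycle_adj_inr_iff.1 hw).2

variable {H : (ringOfTriangles k).Subgraph}

theorem adj_inr_of_mem (hH : IsCycleSubgraph H) {i : Fin k} (hi : inr i ∈ H.verts) :
    H.Adj (inr i) (inl i) ∧ H.Adj (inr i) (inl (i + 1)) := by
  have hsub : H.neighborSet (inr i) ⊆ {inl i, inl (i + 1)} := fun w hw =>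
    adj_inr_iff.1 (H.adj_sub hw)
  exact Subgraph.adj_of_neighborSet_subset_pair (hH.2.2 _ hi) hsub

theorem triangle_le (hH : IsCycleSubgraph H) {i : Fin k} (hadj : H.Adj (inl i) (inl (i + 1)))
    (hi : inr i ∈ H.verts) : triangle i ≤ H := by
  obtain ⟨h₁, h₂⟩ := adj_inr_of_mem hH hi
  refine ⟨?_, ?_⟩
  · rintro v (rfl | rfl | rfl)
    exacts [hadj.fst_mem, hadj.snd_mem, hi]
  · rintro v w ⟨hv, hw, hvw⟩
    rcases hv with rfl | rfl | rfl <;> rcases hw with rfl | rfl | rfl <;>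
      first | exact (hvw.ne rfl).elim | assumption | exact Subgraph.Adj.symm ‹_›

theorem adj_add_one_or_inr_mem (hk : 2 ≤ k) (hH : IsCycleSubgraph H)
    (hne : ∀ j, H ≠ triangle j) {i : Fin k} (hi : inl i ∈ H.verts) :
    H.Adj (inl i) (inl (i + 1)) ∨ inr i ∈ H.verts := by
  by_contra! h
  have hsub : H.neighborSet (inl i) ⊆ {inl (i - 1), inr (i - 1)} := by
    intro w hw
    rcases (adj_inl_iff hk).1 (H.adj_sub hw) with rfl | rfl | rfl | rfl
    · exact (h.1 hw).elim
    · exact (h.2 (H.edge_vert hw.symm)).elim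
    · exact Set.mem_insert _ _
    · exact Set.mem_insert_of_mem _ rfl
  obtain ⟨ha, hb⟩ := Subgraph.adj_of_neighborSet_subset_pair (hH.2.2 _ hi) hsub
  have hadj : H.Adj (inl (i - 1)) (inl (i - 1 + 1)) := by rwa [sub_add_cancel, H.adj_comm]
  exact hne _ ((triangle_isCycleSubgraph hk _).eq_of_le hH (triangle_le hH hadj hb.snd_mem)).symm

theorem inl_mem_verts (hk : 2 ≤ k) (hH : IsCycleSubgraph H) (hne : ∀ j, H ≠ triangle j)
    (i : Fin k) : inl i ∈ H.verts := by
  obtain ⟨v, hv⟩ := hH.1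
  obtain ⟨m, hm⟩ : ∃ m, inl m ∈ H.verts := by
    cases v with
    | inl m => exact ⟨m, hv⟩
    | inr m => exact ⟨m, (adj_inr_of_mem hH hv).1.snd_mem⟩
  refine Fin.cyclic_induction (P := fun j => inl j ∈ H.verts) hm (fun j hj => ?_) i
  rcases adj_add_one_or_inr_mem hk hH hne hj with h | h
  exacts [h.snd_mem, (adj_inr_of_mem hH h).2.snd_mem]

theorem eq_longCycle (hk : 3 ≤ k) (hH : IsCycleSubgraph H) (hne : ∀ j, H ≠ triangle j) :
    H = longCycle {i | inr i ∈ H.verts} := by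
  have hinl := inl_mem_verts (by omega) hH hne
  refine ((longCycle_isCycleSubgraph hk _).eq_of_le hH ⟨?_, ?_⟩).symm
  · rintro v (⟨i, rfl⟩ | ⟨i, hi, rfl⟩)
    exacts [hinl i, hi]
  · rintro v w ⟨-, i, ⟨hi, h | h⟩ | ⟨hi, h⟩⟩ <;> rw [← Subgraph.mem_edgeSet, h, Subgraph.mem_edgeSet]
    · exact (adj_inr_of_mem hH hi).1.symm
    · exact (adj_inr_of_mem hH hi).2
    · exact (adj_add_one_or_inr_mem (by omega) hH hne (hinl i)).resolve_right hi

theorem setOf_isCycleSubgraph (hk : 3 ≤ k) :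
    {H : (ringOfTriangles k).Subgraph | IsCycleSubgraph H} =
      Set.range triangle ∪ Set.range longCycle := by
  ext H
  constructor
  · intro hH
    by_cases htri : ∃ i, triangle i = H
    · exact Or.inl htri
    · exact Or.inr ⟨_, (eq_longCycle hk hH fun j hj => htri ⟨j, hj.symm⟩).symm⟩
  · rintro (⟨i, rfl⟩ | ⟨S, rfl⟩)
    exacts [triangle_isCycleSubgraph (by omega) i, longCycle_isCycleSubgraph hk S]

theorem triangle_injective : Function.Injective (triangle (k := k)) := by
  intro i j h
  have : inr i ∈ (triangle j).verts := h ▸ Set.mem_insert_of_mem _ (Set.mem_insert_of_mem _ rfl)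
  simpa [triangle] using this

theorem longCycle_injective : Function.Injective (longCycle (k := k)) := by
  intro S T h
  ext i
  have : inr i ∈ (longCycle S).verts ↔ inr i ∈ (longCycle T).verts := by rw [h]
  simpa [longCycle] using this

theorem triangle_ne_longCycle (hk : 3 ≤ k) (i : Fin k) (S : Set (Fin k)) :
    triangle i ≠ longCycle S := by
  intro h
  have : inl (i - 1) ∈ (triangle i).verts := h ▸ Or.inl ⟨_, rfl⟩
  rcases this with he | he | he
  · exact Fin.sub_one_ne_self (by omega) i (inl_injective he)
  · exact Fin.add_one_ne_sub_one hk i (inl_injective he).symm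
  · exact inl_ne_inr he

end ringOfTriangles

open ringOfTriangles in
/-- For `k ≥ 3`, the ring of `k` triangles has exactly `k + 2^k` cycles. -/
theorem cycleCount_ringOfTriangles (k : ℕ) (hk : 3 ≤ k) :
    cycleCount (ringOfTriangles k) = k + 2 ^ k := by
  have : NeZero k := ⟨by omega⟩
  have hdisj : Disjoint (Set.range (triangle (k := k))) (Set.range longCycle) :=
    Set.disjoint_range_iff.2 (triangle_ne_longCycle hk)
  rw [cycleCount, setOf_isCycleSubgraph hk, Set.ncard_union_eq hdisj,
    Set.ncard_range_of_injective triangle_injective,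
    Set.ncard_range_of_injective longCycle_injective]
  simp
end
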